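/- arXiv:1412.4589 — 2 statements merged into one kernel-verified Lean document; each statement's English description precedes it below -/
import Mathlib

section
/- With 𝔤, γ, and ad~ as above, the map ad~ : 𝔤 → cl(𝔤) is a Lie algebra homomorphism into cl(𝔤) with the commutator bracket: ad~([x,y]) = [ad~(x), ad~(y)] for all x, y ∈ 𝔤. -/
open CliffordAlgebra

/-!
Let `Ω(x) = ∑ₖ γ(xₖ) γ([x, xₖ]) = 4 ad~(x)` (`spinAd`). In the Clifford algebra
`γ(u) γ(v) + γ(v) γ(u) = polar(u, v)`, hence `[γ(a) γ(c), γ(z)] = polar(c, z) γ(a) - polar(a, z) γ(c)`.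
Invariance makes `ad x` skew for `B`, and for a skew `T` and the basis with `B(xₖ, xⱼ) = -δₖⱼ`,
`∑ₖ f(T xₖ, xₖ) = -∑ₖ f(xₖ, T xₖ)` for every bilinear `f`. Together these give
`[Ω(w), γ(z)] = 4 γ([w, z])`, i.e. `[Ω(w), -]` acts on generators as the derivation `4 ad w`.
Applying this derivation to `Ω(y)`, the same skew-symmetry identity and the Jacobi identity turn
`[Ω(x), Ω(y)]` into `4 Ω([x, y])`.
-/

section Basis

variable {R L κ : Type*} [CommRing R] [AddCommGroup L] [Module R L] [Fintype κ] [DecidableEq κ]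
  {B : LinearMap.BilinForm R L} {b : Module.Basis κ R L}

theorem Module.Basis.apply_left_eq_neg_repr (hb : ∀ i j, B (b i) (b j) = if i = j then -1 else 0)
    (v : L) (i : κ) : B (b i) v = -b.repr v i := by
  conv_lhs => rw [← b.sum_repr v]
  simp only [map_sum, map_smul, hb]
  simp

theorem Module.Basis.apply_right_eq_neg_repr (hb : ∀ i j, B (b i) (b j) = if i = j then -1 else 0)
    (v : L) (i : κ) : B v (b i) = -b.repr v i := by
  conv_lhs => rw [← b.sum_repr v]
  simp only [map_sum, map_smul, LinearMap.sum_apply, LinearMap.smul_apply, hb]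
  simp

theorem Module.Basis.sum_apply_left_smul_eq_neg
    (hb : ∀ i j, B (b i) (b j) = if i = j then -1 else 0) (v : L) :
    ∑ i, B (b i) v • b i = -v := by
  simp only [b.apply_left_eq_neg_repr hb, neg_smul, Finset.sum_neg_distrib, b.sum_repr]

theorem Module.Basis.sum_apply_right_smul_eq_neg
    (hb : ∀ i j, B (b i) (b j) = if i = j then -1 else 0) (v : L) :
    ∑ i, B v (b i) • b i = -v := by
  simp only [b.apply_right_eq_neg_repr hb, neg_smul, Finset.sum_neg_distrib, b.sum_repr]

theorem Module.Basis.sum_apply_skew_left_eq_neg {M : Type*} [AddCommGroup M] [Module R M]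
    (hb : ∀ i j, B (b i) (b j) = if i = j then -1 else 0)
    {T : L →ₗ[R] L} (hT : ∀ u v, B (T u) v = -B u (T v)) (f : L →ₗ[R] L →ₗ[R] M) :
    ∑ i, f (T (b i)) (b i) = -∑ i, f (b i) (T (b i)) := by
  calc ∑ i, f (T (b i)) (b i)
      = ∑ i, ∑ j, B (b i) (T (b j)) • f (b j) (b i) := by
        refine Finset.sum_congr rfl fun i _ => ?_
        conv_lhs => rw [← neg_neg (T (b i)), ← b.sum_apply_right_smul_eq_neg hb]
        simp [hT]
    _ = ∑ j, f (b j) (∑ i, B (b i) (T (b j)) • b i) := by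
        rw [Finset.sum_comm]
        simp
    _ = -∑ i, f (b i) (T (b i)) := by
        simp [b.sum_apply_left_smul_eq_neg hb]

end Basis

section Commutator

variable {A ι : Type*} [Ring A]

theorem Ring.lie_sum (a : A) (s : Finset ι) (f : ι → A) :
    ⁅a, ∑ i ∈ s, f i⁆ = ∑ i ∈ s, ⁅a, f i⁆ := by
  simp only [Ring.lie_def, Finset.mul_sum, Finset.sum_mul, Finset.sum_sub_distrib]

theorem Ring.sum_lie (s : Finset ι) (f : ι → A) (a : A) :
    ⁅∑ i ∈ s, f i, a⁆ = ∑ i ∈ s, ⁅f i, a⁆ := by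
  simp only [Ring.lie_def, Finset.mul_sum, Finset.sum_mul, Finset.sum_sub_distrib]

theorem Ring.lie_mul (a c d : A) : ⁅a, c * d⁆ = ⁅a, c⁆ * d + c * ⁅a, d⁆ := by
  simp only [Ring.lie_def]
  noncomm_ring

end Commutator

theorem CliffordAlgebra.lie_ι_mul_ι_ι {R M : Type*} [CommRing R] [AddCommGroup M] [Module R M]
    {Q : QuadraticForm R M} (a c z : M) :
    ⁅ι Q a * ι Q c, ι Q z⁆
      = QuadraticMap.polar Q c z • ι Q a - QuadraticMap.polar Q a z • ι Q c := by
  rw [Ring.lie_def, mul_assoc, ι_mul_ι_comm c z, mul_sub, ← mul_assoc (ι Q z), ι_mul_ι_comm z a,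
    QuadraticMap.polar_comm Q z, Algebra.smul_def, Algebra.smul_def, ← Algebra.commutes]
  noncomm_ring

section SpinAd

variable {R L κ : Type*} [CommRing R] [LieRing L] [LieAlgebra R L] [Fintype κ] [DecidableEq κ]

noncomputable def spinAd (Q : QuadraticForm R L) (b : Module.Basis κ R L) (x : L) :
    CliffordAlgebra Q :=
  ∑ i, ι Q (b i) * ι Q ⁅x, b i⁆

variable {B : LinearMap.BilinForm R L} {b : Module.Basis κ R L}

local notation "Q" => LinearMap.BilinMap.toQuadraticMap B

theorem lie_spinAd_ι (hb : ∀ i j, B (b i) (b j) = if i = j then -1 else 0)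
    (hinv : ∀ x y z : L, B ⁅x, y⁆ z + B y ⁅x, z⁆ = 0) (w z : L) :
    ⁅spinAd Q b w, ι Q z⁆ = (4 : R) • ι Q ⁅w, z⁆ := by
  have hT : ∀ u v, B (LieAlgebra.ad R L w u) v = -B u (LieAlgebra.ad R L w v) :=
    fun u v => eq_neg_of_add_eq_zero_left (hinv w u v)
  have hskew := b.sum_apply_skew_left_eq_neg hb hT
    (((QuadraticMap.polarBilin Q).flip z).smulRight (ι Q))
  simp only [LinearMap.smulRight_apply, LinearMap.flip_apply, QuadraticMap.polarBilin_apply_apply,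
    LinearMap.smul_apply, LieAlgebra.ad_apply] at hskew
  have hpolar : ∑ i, QuadraticMap.polar Q (b i) z • b i = -(2 : R) • z := by
    simp only [LinearMap.BilinMap.polar_toQuadraticMap, add_smul, Finset.sum_add_distrib,
      b.sum_apply_left_smul_eq_neg hb, b.sum_apply_right_smul_eq_neg hb]
    module
  calc ⁅spinAd Q b w, ι Q z⁆
      = ∑ i, (QuadraticMap.polar Q ⁅w, b i⁆ z • ι Q (b i)
          - QuadraticMap.polar Q (b i) z • ι Q ⁅w, b i⁆) := by
        simp only [spinAd, Ring.sum_lie, lie_ι_mul_ι_ι]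
    _ = -(2 : R) • ι Q ⁅w, ∑ i, QuadraticMap.polar Q (b i) z • b i⁆ := by
        simp only [Finset.sum_sub_distrib, hskew, lie_sum, lie_smul, map_sum, map_smul]
        module
    _ = (4 : R) • ι Q ⁅w, z⁆ := by
        rw [hpolar, lie_smul, map_smul, smul_smul]
        norm_num

theorem lie_spinAd (hb : ∀ i j, B (b i) (b j) = if i = j then -1 else 0)
    (hinv : ∀ x y z : L, B ⁅x, y⁆ z + B y ⁅x, z⁆ = 0) (x y : L) :
    ⁅spinAd Q b x, spinAd Q b y⁆ = (4 : R) • spinAd Q b ⁅x, y⁆ := by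
  have hT : ∀ u v, B (LieAlgebra.ad R L x u) v = -B u (LieAlgebra.ad R L x v) :=
    fun u v => eq_neg_of_add_eq_zero_left (hinv x u v)
  have hskew := b.sum_apply_skew_left_eq_neg hb hT
    ((LinearMap.mul R (CliffordAlgebra Q)).compl₁₂ (ι Q) ((ι Q).comp (LieAlgebra.ad R L y)))
  simp only [LinearMap.compl₁₂_apply, LinearMap.mul_apply', LinearMap.comp_apply,
    LieAlgebra.ad_apply] at hskew
  calc ⁅spinAd Q b x, spinAd Q b y⁆
      = ∑ i, (⁅spinAd Q b x, ι Q (b i)⁆ * ι Q ⁅y, b i⁆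
          + ι Q (b i) * ⁅spinAd Q b x, ι Q ⁅y, b i⁆⁆) := by
        rw [spinAd.eq_1 _ b y, Ring.lie_sum]
        simp only [Ring.lie_mul]
    _ = (4 : R) • ∑ i, (ι Q ⁅x, b i⁆ * ι Q ⁅y, b i⁆ + ι Q (b i) * ι Q ⁅x, ⁅y, b i⁆⁆) := by
        simp only [lie_spinAd_ι hb hinv, smul_mul_assoc, mul_smul_comm, ← smul_add,
          Finset.smul_sum]
    _ = (4 : R) • spinAd Q b ⁅x, y⁆ := by
        rw [Finset.sum_add_distrib, hskew]
        simp only [spinAd, lie_lie, map_sub, mul_sub, Finset.sum_sub_distrib]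
        rw [neg_add_eq_sub]

end SpinAd

theorem adTilde_lieHom_general
    (L : Type*) [LieRing L] [LieAlgebra ℂ L]
    (B : LinearMap.BilinForm ℂ L)
    (hinv : ∀ x y z : L, B ⁅x, y⁆ z + B y ⁅x, z⁆ = 0)
    (n : ℕ) (b : Module.Basis (Fin n) ℂ L)
    (hb : ∀ k j : Fin n, B (b k) (b j) = if k = j then -1 else 0)
    (γ : L →ₗ[ℂ] CliffordAlgebra (LinearMap.BilinMap.toQuadraticMap B))
    (hγ : γ = CliffordAlgebra.ι (LinearMap.BilinMap.toQuadraticMap B))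
    (adT : L → CliffordAlgebra (LinearMap.BilinMap.toQuadraticMap B))
    (hadT : ∀ x : L, adT x = (1/4 : ℂ) • ∑ k : Fin n, γ (b k) * γ ⁅x, b k⁆) :
    ∀ x y : L, adT ⁅x, y⁆ = adT x * adT y - adT y * adT x := by
  subst hγ
  have hadT' : ∀ x, adT x = (1/4 : ℂ) • spinAd _ b x := hadT
  intro x y
  have h := lie_spinAd hb hinv x y
  rw [Ring.lie_def] at h
  rw [hadT', hadT', hadT', smul_mul_smul_comm, smul_mul_smul_comm, ← smul_sub, h, smul_smul]
  norm_num

/-- Let `𝔤 = L` be a finite-dimensional complex Lie algebra with a nondegenerate invariant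
symmetric bilinear form `B`, `cl(𝔤)` the Clifford algebra of the associated quadratic form
(so that `γ(x)² = B(x,x)·1`), and `{x_k}` a basis with `B(x_k, x_j) = -δ_{kj}`.  With
`ad~(x) = (1/4) Σ_k γ(x_k) γ([x, x_k])`, we have `ad~` is a Lie algebra homomorphism into `cl(𝔤)` with the commutator bracket: `ad~([x,y]) = [ad~(x), ad~(y)]`. -/
theorem adTilde_lieHom
    (L : Type*) [LieRing L] [LieAlgebra ℂ L] [Module.Finite ℂ L]
    (B : LinearMap.BilinForm ℂ L)
    (hsymm : ∀ x y : L, B x y = B y x)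
    (hinv : ∀ x y z : L, B ⁅x, y⁆ z + B y ⁅x, z⁆ = 0)
    (hnd : B.Nondegenerate)
    (n : ℕ) (b : Module.Basis (Fin n) ℂ L)
    (hb : ∀ k j : Fin n, B (b k) (b j) = if k = j then -1 else 0)
    (γ : L →ₗ[ℂ] CliffordAlgebra (LinearMap.BilinMap.toQuadraticMap B))
    (hγ : γ = CliffordAlgebra.ι (LinearMap.BilinMap.toQuadraticMap B))
    (adT : L → CliffordAlgebra (LinearMap.BilinMap.toQuadraticMap B))
    (hadT : ∀ x : L, adT x = (1/4 : ℂ) • ∑ k : Fin n, γ (b k) * γ ⁅x, b k⁆) :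
    ∀ x y : L, adT ⁅x, y⁆ = adT x * adT y - adT y * adT x :=
  adTilde_lieHom_general L B hinv n b hb γ hγ adT hadT
end

section
/- Let T² = ℝ²/2πℤ² and consider, for real numbers y¹_{(1)}, y²_{(1)}, y¹_{(2)}, y²_{(2)}, the map φ ↦ [exp(iφ y¹_{(1)} h₁) exp(iφ y²_{(1)} h₂), exp(iφ y¹_{(2)} h₁) exp(iφ y²_{(2)} h₂)] into pairs of diagonal 3×3 unitary matrices modulo the simultaneous action (A,B) ~ (Aζ, ζ⁻¹B) of the center ℤ₃ = {I, ω I, ω² I} of SU(3) (ω = e^{2πi/3}), where h₁ = diag(1,-1,0) and h₂ = diag(0,1,-1). This map is 2π-periodic in φ if and only if there exist x ∈ {0,1,2} and integers k¹₁, k²₁, k¹₂, k²₂ such that y¹_{(1)} = k¹₁ + x/3, y²_{(1)} = k²₁ + 2x/3, y¹_{(2)} = k¹₂ + 2x/3, y²_{(2)} = k²₂ + x/3. -/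
open Matrix

/-- `h₁ = diag(1,-1,0)`. -/
def h1 : Matrix (Fin 3) (Fin 3) ℂ := Matrix.diagonal ![1, -1, 0]

/-- `h₂ = diag(0,1,-1)`. -/
def h2 : Matrix (Fin 3) (Fin 3) ℂ := Matrix.diagonal ![0, 1, -1]

/-- The torus element `exp(iφ y¹ h₁) exp(iφ y² h₂)`. -/
noncomputable def torusElt (y1 y2 φ : ℝ) : Matrix (Fin 3) (Fin 3) ℂ :=
  NormedSpace.exp ((((φ * y1 : ℝ) : ℂ) * Complex.I) • h1) *
    NormedSpace.exp ((((φ * y2 : ℝ) : ℂ) * Complex.I) • h2)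

/-!
Both torus elements are diagonal, with entries `exp(iφ w)` for the weights
`w = y¹, y² - y¹, -y²` of the fundamental representation. Shifting `φ` by `2π` multiplies
the entry of weight `w` by `e(w) = exp(2πi w)`, so periodicity up to a central element `c` says
`e(w) = c` for all three weights of the first pair and `e(w) = c⁻¹` for those of the second.
Writing the cube root of unity as `c = e(x/3)`, and since `e(a) = e(b)` iff `a - b ∈ ℤ`, this
becomes `y¹ ≡ s`, `y² ≡ 2s` modulo `ℤ` with `s = x/3` for the first pair and `s = -x/3`
for the second.
-/

open Complex
open scoped Real

theorem cexp_two_pi_mul_I_mul_eq_iff (a b : ℝ) :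
    cexp (2 * π * I * a) = cexp (2 * π * I * b) ↔ ∃ n : ℤ, a = b + n := by
  have h2piI : 2 * π * I ≠ 0 := by simp [Real.pi_ne_zero, I_ne_zero]
  rw [exp_eq_exp_iff_exists_int]
  refine exists_congr fun n => ⟨fun h => ?_, fun h => by rw [h]; push_cast; ring⟩
  have h' : (a : ℂ) * (2 * π * I) = (b + n) * (2 * π * I) := by linear_combination h
  exact_mod_cast mul_right_cancel₀ h2piI h'

theorem exists_lt_cexp_eq_of_pow_eq_one {n : ℕ} [NeZero n] {c : ℂ} (hc : c ^ n = 1) :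
    ∃ i < n, cexp (2 * π * I * ((i / n : ℝ) : ℂ)) = c := by
  obtain ⟨i, hi, rfl⟩ := (isPrimitiveRoot_exp n (NeZero.ne n)).eq_pow_of_pow_eq_one hc
  refine ⟨i, hi, ?_⟩
  rw [← Complex.exp_nat_mul]
  congr 1
  push_cast
  ring

def torusWeights (y1 y2 : ℝ) : Fin 3 → ℝ := ![y1, y2 - y1, -y2]

theorem torusElt_eq_diagonal (y1 y2 φ : ℝ) :
    torusElt y1 y2 φ = diagonal fun j => cexp (((φ * torusWeights y1 y2 j : ℝ) : ℂ) * I) := by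
  rw [torusElt, h1, h2, ← diagonal_smul, ← diagonal_smul, exp_diagonal, exp_diagonal,
    diagonal_mul_diagonal]
  congr 1
  funext j
  fin_cases j <;>
    simp [torusWeights, ← exp_eq_exp_ℂ, ← Complex.exp_add, sub_eq_neg_add, mul_add, add_mul]

theorem torusElt_add_two_pi_eq_smul_iff (y1 y2 φ : ℝ) (c : ℂ) :
    torusElt y1 y2 (φ + 2 * π) = c • torusElt y1 y2 φ ↔
      ∀ j, cexp (2 * π * I * torusWeights y1 y2 j) = c := by
  rw [torusElt_eq_diagonal, torusElt_eq_diagonal, ← diagonal_smul, diagonal_eq_diagonal_iff]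
  refine forall_congr' fun j => ?_
  set w := torusWeights y1 y2 j
  have hshift : (((φ + 2 * π) * w : ℝ) : ℂ) * I = 2 * π * I * w + ((φ * w : ℝ) : ℂ) * I := by
    push_cast; ring
  rw [Pi.smul_apply, smul_eq_mul, hshift, Complex.exp_add, mul_left_inj' (exp_ne_zero _)]

theorem forall_cexp_torusWeights_eq_iff (y1 y2 s : ℝ) :
    (∀ j, cexp (2 * π * I * torusWeights y1 y2 j) = cexp (2 * π * I * s)) ↔
      (∃ k : ℤ, y1 = k + s) ∧ (∃ k : ℤ, y2 = k + 2 * s) ∧ ∃ k : ℤ, 3 * s = k := by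
  simp only [Fin.forall_fin_succ, IsEmpty.forall_iff, and_true, cexp_two_pi_mul_I_mul_eq_iff,
    torusWeights, cons_val_zero, Fin.succ_zero_eq_one, cons_val_one, Fin.succ_one_eq_two, cons_val]
  constructor
  · rintro ⟨⟨a, ha⟩, ⟨b, hb⟩, ⟨c, hc⟩⟩
    exact ⟨⟨a, by linarith⟩, ⟨a + b, by push_cast; linarith⟩,
      ⟨-(a + b + c), by push_cast; linarith⟩⟩
  · rintro ⟨⟨a, ha⟩, ⟨b, hb⟩, ⟨c, hc⟩⟩
    exact ⟨⟨a, by linarith⟩, ⟨b - a, by push_cast; linarith⟩, ⟨-b - c, by push_cast; linarith⟩⟩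

theorem inv_cexp_two_pi_mul_I_mul (s : ℝ) :
    (cexp (2 * π * I * s))⁻¹ = cexp (2 * π * I * ((-s : ℝ) : ℂ)) := by
  rw [← Complex.exp_neg]
  congr 1
  push_cast
  ring

/-- Proposition 5: the map
`φ ↦ [exp(iφ y¹₍₁₎h₁)exp(iφ y²₍₁₎h₂), exp(iφ y¹₍₂₎h₁)exp(iφ y²₍₂₎h₂)]` into pairs of
diagonal unitaries modulo the simultaneous action `(A,B) ~ (Ac, c⁻¹B)` of the center
`ℤ₃ = {c·I : c³ = 1}` of `SU(3)` is `2π`-periodic in `φ` if and only if there are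
`x ∈ {0,1,2}` and integers `kᵇₐ` with `y¹₍₁₎ = k¹₁ + x/3`, `y²₍₁₎ = k²₁ + 2x/3`,
`y¹₍₂₎ = k¹₂ + 2x/3`, `y²₍₂₎ = k²₂ + x/3`. -/
theorem torus_action_two_pi_periodic_iff (y11 y12 y21 y22 : ℝ) :
    (∀ φ : ℝ, ∃ c : ℂ, c ^ 3 = 1 ∧
        torusElt y11 y12 (φ + 2 * Real.pi) = c • torusElt y11 y12 φ ∧
        torusElt y21 y22 (φ + 2 * Real.pi) = c⁻¹ • torusElt y21 y22 φ) ↔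
      ∃ (x k11 k12 k21 k22 : ℤ), (x = 0 ∨ x = 1 ∨ x = 2) ∧
        y11 = k11 + x / 3 ∧ y12 = k12 + 2 * x / 3 ∧
        y21 = k21 + 2 * x / 3 ∧ y22 = k22 + x / 3 := by
  simp only [torusElt_add_two_pi_eq_smul_iff, forall_const]
  constructor
  · rintro ⟨c, hc, h1, h2⟩
    obtain ⟨x, hx, rfl⟩ := exists_lt_cexp_eq_of_pow_eq_one hc
    rw [inv_cexp_two_pi_mul_I_mul] at h2
    obtain ⟨⟨k11, h11⟩, ⟨k12, h12⟩, -⟩ := (forall_cexp_torusWeights_eq_iff _ _ _).1 h1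
    obtain ⟨⟨k21, h21⟩, ⟨k22, h22⟩, -⟩ := (forall_cexp_torusWeights_eq_iff _ _ _).1 h2
    refine ⟨x, k11, k12, k21 - x, k22 - x, by omega, ?_, ?_, ?_, ?_⟩ <;>
      push_cast at * <;> linarith
  · rintro ⟨x, k11, k12, k21, k22, -, rfl, rfl, rfl, rfl⟩
    refine ⟨cexp (2 * π * I * ((x / 3 : ℝ) : ℂ)), ?_, ?_, ?_⟩
    · rw [← Complex.exp_nat_mul]
      convert exp_int_mul_two_pi_mul_I x using 2
      push_cast; ring
    · exact (forall_cexp_torusWeights_eq_iff _ _ _).2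
        ⟨⟨k11, rfl⟩, ⟨k12, by ring⟩, ⟨x, by ring⟩⟩
    · rw [inv_cexp_two_pi_mul_I_mul]
      exact (forall_cexp_torusWeights_eq_iff _ _ _).2
        ⟨⟨k21 + x, by push_cast; ring⟩, ⟨k22 + x, by push_cast; ring⟩, ⟨-x, by push_cast; ring⟩⟩
end
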